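/- arXiv:math/0307316 — 3 statements merged into one kernel-verified Lean document; each statement's English description precedes it below -/
import Mathlib

section
/- If C is a compact invariant set of a flow Z on a compact metric space and U is a compact neighborhood of C, then the set A_w(Z,C) ∩ U = {x ∈ U : ω_Z(x) ∩ C ≠ ∅} is dense in U if and only if it is residual (comeager) in U. -/
open Filter Topology Metric Set

/-- A continuous flow on `M`. -/
def IsFlow {M : Type*} [TopologicalSpace M] (φ : ℝ → M → M) : Prop :=
  Continuous (fun p : ℝ × M => φ p.1 p.2) ∧ (∀ x, φ 0 x = x) ∧
    ∀ s t x, φ (s + t) x = φ s (φ t x)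

/-- The omega-limit set of `x` under the flow `φ`. -/
def omegaLim {M : Type*} [TopologicalSpace M] (φ : ℝ → M → M) (x : M) : Set M :=
  {y | ∃ t : ℕ → ℝ, Tendsto t atTop atTop ∧ Tendsto (fun n => φ (t n) x) atTop (𝓝 y)}

/-- The weak attraction set is a countable intersection of open sets. -/
lemma omegaLim_inter_eq_iInter {M : Type*} [MetricSpace M] [CompactSpace M]
    (φ : ℝ → M → M) (hφ : IsFlow φ) (C : Set M) (hC : IsCompact C) :
    {x : M | (omegaLim φ x ∩ C).Nonempty} =
      ⋂ n : ℕ, {x : M | ∃ t : ℝ, (n : ℝ) ≤ t ∧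
        φ t x ∈ Metric.thickening (1 / (n + 1)) C} := by
  ext x
  simp only [mem_setOf_eq, mem_iInter]
  constructor
  · rintro ⟨y, ⟨t, ht, hconv⟩, hyC⟩ n
    have hpos : (0 : ℝ) < 1 / (n + 1) := by positivity
    have h1 : ∀ᶠ m in atTop, dist (φ (t m) x) y < 1 / (n + 1) :=
      (tendsto_iff_dist_tendsto_zero.mp hconv).eventually_lt_const hpos
    have h2 : ∀ᶠ m in atTop, (n : ℝ) ≤ t m := ht.eventually_ge_atTop _
    obtain ⟨m, hm1, hm2⟩ := (h1.and h2).exists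
    exact ⟨t m, hm2, Metric.mem_thickening_iff.mpr ⟨y, hyC, hm1⟩⟩
  · intro h
    choose t ht hthick using h
    choose c hcC hcdist using fun n => Metric.mem_thickening_iff.mp (hthick n)
    obtain ⟨y, hyC, ψ, hψ, hconv⟩ := hC.tendsto_subseq hcC
    refine ⟨y, ⟨t ∘ ψ, ?_, ?_⟩, hyC⟩
    · apply tendsto_atTop_mono (fun n => ?_)
        (tendsto_natCast_atTop_atTop.comp hψ.tendsto_atTop)
      exact ht (ψ n)
    · have hbound : ∀ n : ℕ, dist (c (ψ n)) (φ (t (ψ n)) x) ≤ 1 / ((n : ℝ) + 1) := by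
        intro n
        have h1 : dist (c (ψ n)) (φ (t (ψ n)) x) ≤ 1 / ((ψ n : ℝ) + 1) := by
          rw [dist_comm]; exact (hcdist (ψ n)).le
        refine h1.trans (one_div_le_one_div_of_le (by positivity) ?_)
        have : (n : ℝ) ≤ (ψ n : ℝ) := Nat.cast_le.mpr hψ.le_apply
        linarith
      have hd : Tendsto (fun n => dist (c (ψ n)) (φ (t (ψ n)) x)) atTop (𝓝 0) :=
        squeeze_zero (fun n => dist_nonneg) hbound
          tendsto_one_div_add_atTop_nhds_zero_nat
      exact hconv.congr_dist hd

/-- For a compact invariant set `C` of a flow on a compact metric space and a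
compact neighborhood `U` of `C`, the set `A_w(Z,C) ∩ U` is dense in `U` iff it is
residual (comeager) in `U`. -/
theorem stmt_0 {M : Type*} [MetricSpace M] [CompactSpace M]
    (φ : ℝ → M → M) (hφ : IsFlow φ) (C U : Set M)
    (hC : IsCompact C) (hCinv : ∀ t : ℝ, φ t '' C = C)
    (hU : IsCompact U) (hCU : C ⊆ interior U) :
    Dense {x : U | (omegaLim φ (x : M) ∩ C).Nonempty} ↔
      {x : U | (omegaLim φ (x : M) ∩ C).Nonempty} ∈ residual U := by
  haveI : CompactSpace U := isCompact_iff_compactSpace.mp hU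
  have hopen : ∀ n : ℕ, IsOpen {x : M | ∃ t : ℝ, (n : ℝ) ≤ t ∧
      φ t x ∈ Metric.thickening (1 / (n + 1)) C} := by
    intro n
    have : {x : M | ∃ t : ℝ, (n : ℝ) ≤ t ∧ φ t x ∈ Metric.thickening (1 / (n + 1)) C} =
        ⋃ t ∈ Ici (n : ℝ), (fun x => φ t x) ⁻¹' Metric.thickening (1 / (n + 1)) C := by
      ext x; simp [mem_setOf_eq]
    rw [this]
    exact isOpen_biUnion fun t _ =>
      Metric.isOpen_thickening.preimage (hφ.1.comp (Continuous.prodMk_right t))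
  have hSeq : {x : U | (omegaLim φ (x : M) ∩ C).Nonempty} =
      ⋂ n : ℕ, (Subtype.val ⁻¹' {x : M | ∃ t : ℝ, (n : ℝ) ≤ t ∧
        φ t x ∈ Metric.thickening (1 / (n + 1)) C} : Set U) := by
    rw [← preimage_iInter, ← omegaLim_inter_eq_iInter φ hφ C hC]
    rfl
  constructor
  · intro hdense
    rw [hSeq]
    refine countable_iInter_mem.mpr fun n => ?_
    refine residual_of_dense_open ((hopen n).preimage continuous_subtype_val) ?_
    refine hdense.mono ?_
    rw [hSeq]
    exact iInter_subset _ n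
  · exact dense_of_mem_residual
end

section
/- For a continuous flow Z on a compact metric space, a compact set C, a compact neighborhood U of C, and n ∈ ℕ, the set W_n = {x ∈ U : Z_t(x) ∈ B_{1/n}(C) for some t > n} is open in U, and A_w(Z,C) ∩ U = ⋂_n W_n. -/
open Filter Topology Metric Set

/-- the sets `W n` are open in `U` and their intersection is `A_w(Z,C) ∩ U`. -/
theorem stmt_1 {M : Type*} [MetricSpace M] [CompactSpace M]
    (φ : ℝ → M → M) (hφ : IsFlow φ) (C U : Set M)
    (hC : IsCompact C) (hU : IsCompact U) (hCU : C ⊆ interior U)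
    (W : ℕ → Set M)
    (hW : ∀ n : ℕ, W n =
      {x ∈ U | ∃ t : ℝ, (n : ℝ) < t ∧ φ t x ∈ Metric.thickening (1 / (n + 1)) C}) :
    (∀ n : ℕ, IsOpen ((fun x : U => (x : M)) ⁻¹' W n)) ∧
      {x ∈ U | (omegaLim φ x ∩ C).Nonempty} = ⋂ n : ℕ, W n := by
  have hcont : ∀ t : ℝ, Continuous (fun x => φ t x) :=
    fun t => hφ.1.comp (continuous_const.prodMk continuous_id)
  constructor
  · intro n
    have hV : IsOpen {x : M | ∃ t : ℝ, (n : ℝ) < t ∧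
        φ t x ∈ Metric.thickening (1 / (n + 1)) C} := by
      have : {x : M | ∃ t : ℝ, (n : ℝ) < t ∧ φ t x ∈ Metric.thickening (1 / (n + 1)) C}
          = ⋃ t : ℝ, ⋃ _ : (n : ℝ) < t, (fun x => φ t x) ⁻¹' Metric.thickening (1 / (n + 1)) C := by
        ext x; simp [and_comm]
      rw [this]
      exact isOpen_iUnion fun t => isOpen_iUnion fun _ =>
        isOpen_thickening.preimage (hcont t)
    have heq : ((fun x : U => (x : M)) ⁻¹' W n) =
        (fun x : U => (x : M)) ⁻¹' {x : M | ∃ t : ℝ, (n : ℝ) < t ∧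
          φ t x ∈ Metric.thickening (1 / (n + 1)) C} := by
      ext x
      simp [hW n, x.2]
    rw [heq]
    exact hV.preimage continuous_subtype_val
  · ext x
    simp only [mem_iInter, mem_setOf_eq]
    constructor
    · rintro ⟨hxU, y, hyω, hyC⟩ n
      rw [hW n]
      obtain ⟨t, ht, hconv⟩ := hyω
      have hδ : (0 : ℝ) < 1 / (n + 1) := by positivity
      have h1 : ∀ᶠ k in atTop, (n : ℝ) < t k := ht.eventually (eventually_gt_atTop (n : ℝ))
      have h2 : ∀ᶠ k in atTop, dist (φ (t k) x) y < 1 / (n + 1) := by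
        obtain ⟨N, hN⟩ := Metric.tendsto_atTop.1 hconv _ hδ
        exact eventually_atTop.2 ⟨N, hN⟩
      obtain ⟨k, hk1, hk2⟩ := (h1.and h2).exists
      exact ⟨hxU, t k, hk1, Metric.mem_thickening_iff.2 ⟨y, hyC, hk2⟩⟩
    · intro h
      have hxU : x ∈ U := by
        have := h 0; rw [hW 0] at this; exact this.1
      have key : ∀ n : ℕ, ∃ t : ℝ, (n : ℝ) < t ∧
          φ t x ∈ Metric.thickening (1 / (n + 1)) C := by
        intro n; have := h n; rw [hW n] at this; exact this.2
      choose t ht hthick using key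
      have key2 : ∀ n : ℕ, ∃ c ∈ C, dist (φ (t n) x) c < 1 / (n + 1) :=
        fun n => Metric.mem_thickening_iff.1 (hthick n)
      choose c hcC hdist using key2
      obtain ⟨y, hyC, ψ, hψ, hcconv⟩ := hC.tendsto_subseq hcC
      refine ⟨hxU, y, ⟨fun k => t (ψ k), ?_, ?_⟩, hyC⟩
      · apply tendsto_atTop_mono (fun k => (ht (ψ k)).le.trans' ?_)
          tendsto_natCast_atTop_atTop
        exact_mod_cast Nat.cast_le.2 (hψ.le_apply)
      · have hd0 : Tendsto (fun k => dist (φ (t (ψ k)) x) (c (ψ k))) atTop (𝓝 0) := by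
          apply squeeze_zero (fun k => dist_nonneg) (fun k => (hdist (ψ k)).le)
          have : Tendsto (fun n : ℕ => 1 / ((n : ℝ) + 1)) atTop (𝓝 0) :=
            tendsto_one_div_add_atTop_nhds_zero_nat
          exact this.comp hψ.tendsto_atTop
        have hd1 : Tendsto (fun k => dist (c (ψ k)) y) atTop (𝓝 0) :=
          tendsto_iff_dist_tendsto_zero.1 hcconv
        rw [tendsto_iff_dist_tendsto_zero]
        apply squeeze_zero (fun k => dist_nonneg)
          (fun k => dist_triangle (φ (t (ψ k)) x) (c (ψ k)) y)
        simpa using hd0.add hd1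
end

section
/- Let Λ(Y) = {q ∈ Λ_Y : for all δ > 0 there is a δ-chain joining σ to q}, where σ ∈ Λ_Y is a fixed point. Suppose that for every δ > 0 and every p ∈ Λ(Y) there exist x ∈ B_δ(p) and t > 1 with Y_t(x) ∈ B_δ(σ). Then Λ(Y) is chain-transitive. -/
open Filter Topology Metric Set

/-- A `δ`-chain of the flow `φ` joining `q` to `p`. -/
def DeltaChain {M : Type*} [MetricSpace M] (φ : ℝ → M → M) (δ : ℝ) (q p : M) : Prop :=
  ∃ (n : ℕ) (qs : Fin (n + 2) → M) (ts : Fin (n + 1) → ℝ),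
    qs 0 = q ∧ qs (Fin.last (n + 1)) = p ∧
    ∀ i : Fin (n + 1), 1 ≤ ts i ∧
      (φ (ts i) '' Metric.ball (qs i.castSucc) δ ∩ Metric.ball (qs i.succ) δ).Nonempty

/-- A compact invariant set is chain-transitive if any two of its points are joined
by `δ`-chains for all `δ > 0`. -/
def ChainTransitive {M : Type*} [MetricSpace M] (φ : ℝ → M → M) (Λ : Set M) : Prop :=
  ∀ p ∈ Λ, ∀ q ∈ Λ, ∀ δ > (0:ℝ), DeltaChain φ δ p q

/-- Lyapunov stability of a compact invariant set. -/
def LyapunovStable {M : Type*} [TopologicalSpace M] (φ : ℝ → M → M) (Λ : Set M) : Prop :=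
  ∀ U : Set M, IsOpen U → Λ ⊆ U →
    ∃ V : Set M, IsOpen V ∧ Λ ⊆ V ∧ V ⊆ U ∧ ∀ t > (0:ℝ), φ t '' V ⊆ U

theorem DeltaChain.cons {M : Type*} [MetricSpace M] {φ : ℝ → M → M} {δ t : ℝ} {a b c : M}
    (ht : 1 ≤ t) (hstep : (φ t '' ball a δ ∩ ball b δ).Nonempty)
    (h : DeltaChain φ δ b c) : DeltaChain φ δ a c := by
  obtain ⟨n, qs, ts, h0, hlast, hsteps⟩ := h
  refine ⟨n + 1, Fin.cons a qs, Fin.cons t ts, rfl, hlast, ?_⟩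
  intro i
  induction i using Fin.cases with
  | zero => exact ⟨ht, by simpa [h0] using hstep⟩
  | succ j =>
    refine ⟨(hsteps j).1, ?_⟩
    rw [← Fin.succ_castSucc]
    simpa using (hsteps j).2

theorem stmt_9_general {M : Type*} [MetricSpace M]
    (φ : ℝ → M → M) (ΛY : Set M) (σ : M)
    (hyp : ∀ δ > (0:ℝ), ∀ p ∈ {q ∈ ΛY | ∀ δ' > (0:ℝ), DeltaChain φ δ' σ q},
      ∃ x ∈ Metric.ball p δ, ∃ t : ℝ, 1 < t ∧ φ t x ∈ Metric.ball σ δ) :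
    ChainTransitive φ {q ∈ ΛY | ∀ δ' > (0:ℝ), DeltaChain φ δ' σ q} := by
  rintro p hp q ⟨-, hq⟩ δ hδ
  obtain ⟨x, hx, t, ht, hxt⟩ := hyp δ hδ p hp
  exact (hq δ hδ).cons ht.le ⟨φ t x, mem_image_of_mem _ hx, hxt⟩

/-- the set of points chained from the singularity `σ` is chain-transitive. -/
theorem stmt_9 {M : Type*} [MetricSpace M] [CompactSpace M]
    (φ : ℝ → M → M) (hφ : IsFlow φ) (ΛY : Set M) (σ : M)
    (hΛc : IsCompact ΛY) (hΛinv : ∀ t : ℝ, φ t '' ΛY = ΛY)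
    (hσ : σ ∈ ΛY) (hσfix : ∀ t : ℝ, φ t σ = σ)
    (hyp : ∀ δ > (0:ℝ), ∀ p ∈ {q ∈ ΛY | ∀ δ' > (0:ℝ), DeltaChain φ δ' σ q},
      ∃ x ∈ Metric.ball p δ, ∃ t : ℝ, 1 < t ∧ φ t x ∈ Metric.ball σ δ) :
    ChainTransitive φ {q ∈ ΛY | ∀ δ' > (0:ℝ), DeltaChain φ δ' σ q} :=
  stmt_9_general φ ΛY σ hyp
end
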